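/- Consider two constrained optimization problems over z ∈ ℝ^N: (P1) minimize f(z) subject to h_i(z) + β_i(z) ≤ 0 for i = 1..m, and (P2) minimize f(z) subject to h_i(z) + β_i(z*) ≤ 0 where β_i(z*) are constants. Suppose z* is a KKT point of (P2) with multipliers μ ≥ 0, and suppose that for every i with μ_i > 0 the gradient ∇β_i(z*) = 0. Then z* is a KKT point of (P1) with the same multipliers μ. -/

import Mathlib

theorem smul_fderiv_add_eq_of_smul_fderiv_eq_zero {𝕜 E F : Type*} [NontriviallyNormedField 𝕜]
    [NormedAddCommGroup E] [NormedSpace 𝕜 E] [NormedAddCommGroup F] [NormedSpace 𝕜 F]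
    {g b : E → F} {x : E} {c : 𝕜} (hg : DifferentiableAt 𝕜 g x) (hb : DifferentiableAt 𝕜 b x)
    (hc : c • fderiv 𝕜 b x = 0) :
    c • fderiv 𝕜 (fun z => g z + b z) x = c • fderiv 𝕜 g x := by
  rw [fderiv_fun_add hg hb, smul_add, hc, add_zero]

theorem smul_eq_zero_of_nonneg_of_pos_imp {M : Type*} [AddCommGroup M] [Module ℝ M]
    {c : ℝ} {v : M} (hc : 0 ≤ c) (hv : 0 < c → v = 0) : c • v = 0 := by
  rcases hc.eq_or_lt with rfl | hpos
  · exact zero_smul ℝ v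
  · rw [hv hpos, smul_zero]

theorem stmt7_general {N m : ℕ}
    (f : (Fin N → ℝ) → ℝ) (h β : Fin m → (Fin N → ℝ) → ℝ)
    (hh : ∀ i, Differentiable ℝ (h i))
    (hβd : ∀ i, Differentiable ℝ (β i))
    (zstar : Fin N → ℝ) (μ : Fin m → ℝ)
    -- dual feasibility
    (hμ : ∀ i, 0 ≤ μ i)
    -- primal feasibility (same for (P1) and (P2) since the constants are `β i z*`)
    (hfeas : ∀ i, h i zstar + β i zstar ≤ 0)
    -- complementary slackness
    (hcs : ∀ i, μ i * (h i zstar + β i zstar) = 0)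
    -- stationarity for (P2): the backoffs are constants, so only `∇(h i)` appears
    (hstat2 : fderiv ℝ f zstar + ∑ i, μ i • fderiv ℝ (h i) zstar = 0)
    -- the gradients of active backoff terms vanish
    (hβ0 : ∀ i, 0 < μ i → fderiv ℝ (β i) zstar = 0) :
    -- KKT conditions of (P1) with the same multipliers
    (fderiv ℝ f zstar + ∑ i, μ i • fderiv ℝ (fun z => h i z + β i z) zstar = 0) ∧
    (∀ i, h i zstar + β i zstar ≤ 0) ∧ (∀ i, 0 ≤ μ i) ∧
    (∀ i, μ i * (h i zstar + β i zstar) = 0) := by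
  refine ⟨?_, hfeas, hμ, hcs⟩
  have hterm : ∀ i, μ i • fderiv ℝ (fun z => h i z + β i z) zstar
      = μ i • fderiv ℝ (h i) zstar := fun i =>
    smul_fderiv_add_eq_of_smul_fderiv_eq_zero (hh i zstar) (hβd i zstar)
      (smul_eq_zero_of_nonneg_of_pos_imp (hμ i) (hβ0 i))
  rwa [Finset.sum_congr rfl fun i _ => hterm i]

/-- If `z*` is a KKT point of the fixed-backoff problem (P2)
(minimize `f` s.t. `h i z + β i z* ≤ 0`) with multipliers `μ ≥ 0`, and
`∇(β i) z* = 0` for every `i` with `μ i > 0`, then `z*` is a KKT point of the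
full problem (P1) (minimize `f` s.t. `h i z + β i z ≤ 0`) with the same multipliers. -/
theorem stmt7 {N m : ℕ}
    (f : (Fin N → ℝ) → ℝ) (h β : Fin m → (Fin N → ℝ) → ℝ)
    (hf : Differentiable ℝ f) (hh : ∀ i, Differentiable ℝ (h i))
    (hβd : ∀ i, Differentiable ℝ (β i))
    (zstar : Fin N → ℝ) (μ : Fin m → ℝ)
    -- dual feasibility
    (hμ : ∀ i, 0 ≤ μ i)
    -- primal feasibility (same for (P1) and (P2) since the constants are `β i z*`)
    (hfeas : ∀ i, h i zstar + β i zstar ≤ 0)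
    -- complementary slackness
    (hcs : ∀ i, μ i * (h i zstar + β i zstar) = 0)
    -- stationarity for (P2): the backoffs are constants, so only `∇(h i)` appears
    (hstat2 : fderiv ℝ f zstar + ∑ i, μ i • fderiv ℝ (h i) zstar = 0)
    -- the gradients of active backoff terms vanish
    (hβ0 : ∀ i, 0 < μ i → fderiv ℝ (β i) zstar = 0) :
    -- KKT conditions of (P1) with the same multipliers
    (fderiv ℝ f zstar + ∑ i, μ i • fderiv ℝ (fun z => h i z + β i z) zstar = 0) ∧
    (∀ i, h i zstar + β i zstar ≤ 0) ∧ (∀ i, 0 ≤ μ i) ∧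
    (∀ i, μ i * (h i zstar + β i zstar) = 0) :=
  stmt7_general f h β hh hβd zstar μ hμ hfeas hcs hstat2 hβ0
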